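/- arXiv:2408.08502 — 6 statements merged into one kernel-verified Lean document; each statement's English description precedes it below -/
import Mathlib

section
/- Let x, y₀ ∈ ℝ, let m_t, m_{t−1} ∈ [0,1) with m_{t−1} ≠ 1, let δ_t, δ_{t−1} ≥ 0, set γ = (1−m_t)/(1−m_{t−1}), and assume δ_t ≥ γ²·δ_{t−1}. Then the convolution of (i) the pushforward of the Gaussian measure with mean (1−m_{t−1})·y₀ + m_{t−1}·x and variance δ_{t−1} under the affine map w ↦ γ·w + (m_t − γ·m_{t−1})·x with (ii) the Gaussian measure with mean 0 and variance δ_t − γ²·δ_{t−1} equals the Gaussian measure with mean (1−m_t)·y₀ + m_t·x and variance δ_t. -/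
open MeasureTheory ProbabilityTheory
open scoped NNReal

/-!
The transition pushes `N(μ, v)` forward under an affine map `w ↦ γ w + b`, which gives
`N(γ μ + b, γ² v)`, and Gaussian convolution adds means and variances. The means agree because
`γ (1 - m_{t-1}) = 1 - m_t`, and the variances because `γ² δ_{t-1} + (δ_t - γ² δ_{t-1}) = δ_t`.
-/

lemma gaussianReal_map_affine (μ : ℝ) (v : ℝ≥0) (a b : ℝ) :
    (gaussianReal μ v).map (fun w ↦ a * w + b) =
      gaussianReal (a * μ + b) (.mk (a ^ 2) (sq_nonneg _) * v) := by
  have h : (fun w : ℝ ↦ a * w + b) = (· + b) ∘ (a * ·) := rfl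
  rw [h, ← Measure.map_map (measurable_add_const b) (measurable_const_mul a),
    gaussianReal_map_const_mul, gaussianReal_map_add_const]

/-- Consistency of the Brownian-bridge marginal (Eq. (6)) with its one-step transition
(Eq. (7)): convolving the pushforward of `N((1−m_{t−1})·y₀ + m_{t−1}·x, δ_{t−1})` under
`w ↦ γ·w + (m_t − γ·m_{t−1})·x` with `N(0, δ_t − γ²·δ_{t−1})` gives
`N((1−m_t)·y₀ + m_t·x, δ_t)`, where `γ = (1−m_t)/(1−m_{t−1})`. -/
theorem bbdm_marginal_transition_consistency (x y₀ : ℝ) (mt mtm1 : ℝ)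
    (hm : mtm1 ≠ 1)
    (δt δtm1 : ℝ≥0) (γ : ℝ) (hγ : γ = (1 - mt) / (1 - mtm1))
    (hδ : γ ^ 2 * δtm1 ≤ (δt : ℝ)) :
    (Measure.map (fun w : ℝ => γ * w + (mt - γ * mtm1) * x)
        (gaussianReal ((1 - mtm1) * y₀ + mtm1 * x) δtm1)).conv
        (gaussianReal 0 (δt - ⟨γ ^ 2 * δtm1, by positivity⟩))
      = gaussianReal ((1 - mt) * y₀ + mt * x) δt := by
  rw [gaussianReal_map_affine, gaussianReal_conv_gaussianReal]
  congr 1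
  · have hγ_mul : γ * (1 - mtm1) = 1 - mt := by
      rw [hγ, div_mul_cancel₀ _ (sub_ne_zero.mpr hm.symm)]
    linear_combination y₀ * hγ_mul
  · exact add_tsub_cancel_of_le (NNReal.coe_le_coe.mp hδ)
end

section
/- Let x, y₀, w, z ∈ ℝ, let m_t, m_{t−1} ∈ ℝ with m_{t−1} ≠ 1, let γ = (1−m_t)/(1−m_{t−1}), and let δ_{t|t−1}, δ_{t−1} > 0. Set δ_t = δ_{t|t−1} + γ²·δ_{t−1}, δ* = δ_{t|t−1}·δ_{t−1}/δ_t and μ* = (δ_{t−1}/δ_t)·γ·z + (1−m_{t−1})·(δ_{t|t−1}/δ_t)·y₀ + (m_{t−1} − m_t·γ·δ_{t−1}/δ_t)·x. Then the product of Gaussian densities f(z; γ·w + (m_t − γ·m_{t−1})·x, δ_{t|t−1}) · f(w; (1−m_{t−1})·y₀ + m_{t−1}·x, δ_{t−1}) equals f(w; μ*, δ*) · f(z; (1−m_t)·y₀ + m_t·x, δ_t), where f(u; m, v) = (2πv)^{−1/2}·exp(−(u−m)²/(2v)) is the Gaussian probability density with mean m and variance v. -/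
open scoped Real

/-- The one-dimensional Gaussian probability density with mean `m` and variance `v`:
`f(u; m, v) = (2πv)^(−1/2)·exp(−(u−m)²/(2v))`. -/
noncomputable def gaussDensity (u m v : ℝ) : ℝ :=
    (2 * π * v) ^ (-(1 : ℝ) / 2) * Real.exp (-(u - m) ^ 2 / (2 * v))

/-- Bayes-rule computation of the Brownian-bridge reverse posterior (Appendix A.2):
`f(z; γw + (m_t − γm_{t−1})x, δ_{t|t−1}) · f(w; (1−m_{t−1})y₀ + m_{t−1}x, δ_{t−1})
  = f(w; μ*, δ*) · f(z; (1−m_t)y₀ + m_t x, δ_t)`. -/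
theorem bbdm_posterior_bayes (x y₀ w z : ℝ) (mt mtm1 γ : ℝ)
    (δcond δtm1 : ℝ) (hδcond : 0 < δcond) (hδtm1 : 0 < δtm1)
    (hm : mtm1 ≠ 1) (hγ : γ = (1 - mt) / (1 - mtm1))
    (δt δstar μstar : ℝ)
    (hδt : δt = δcond + γ ^ 2 * δtm1)
    (hδstar : δstar = δcond * δtm1 / δt)
    (hμstar : μstar = (δtm1 / δt) * γ * z + (1 - mtm1) * (δcond / δt) * y₀
        + (mtm1 - mt * γ * δtm1 / δt) * x) :
    gaussDensity z (γ * w + (mt - γ * mtm1) * x) δcond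
        * gaussDensity w ((1 - mtm1) * y₀ + mtm1 * x) δtm1
      = gaussDensity w μstar δstar
        * gaussDensity z ((1 - mt) * y₀ + mt * x) δt := by
  have hm' : (1 : ℝ) - mtm1 ≠ 0 := sub_ne_zero.mpr (Ne.symm hm)
  have hγ' : γ * (1 - mtm1) = 1 - mt := by
    rw [hγ]; field_simp
  have hδt0 : 0 < δt := by
    rw [hδt]; positivity
  have hδstar0 : 0 < δstar := by
    rw [hδstar]; positivity
  have hprod : δcond * δtm1 = δstar * δt := by
    rw [hδstar]; field_simp
  unfold gaussDensity
  have h2π : (0:ℝ) < 2 * π := by positivity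
  have hb1 : (0:ℝ) ≤ 2 * π * δcond := by positivity
  have hb2 : (0:ℝ) ≤ 2 * π * δtm1 := by positivity
  have hb3 : (0:ℝ) ≤ 2 * π * δstar := by positivity
  have hconst : (2 * π * δcond) ^ (-(1:ℝ)/2) * (2 * π * δtm1) ^ (-(1:ℝ)/2)
      = (2 * π * δstar) ^ (-(1:ℝ)/2) * (2 * π * δt) ^ (-(1:ℝ)/2) := by
    rw [← Real.mul_rpow hb1 hb2, ← Real.mul_rpow hb3 (by positivity)]
    congr 1
    linear_combination (4 * π ^ 2) * hprod
  have hexp : Real.exp (-(z - (γ * w + (mt - γ * mtm1) * x)) ^ 2 / (2 * δcond)) *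
      Real.exp (-(w - ((1 - mtm1) * y₀ + mtm1 * x)) ^ 2 / (2 * δtm1))
      = Real.exp (-(w - μstar) ^ 2 / (2 * δstar)) *
        Real.exp (-(z - ((1 - mt) * y₀ + mt * x)) ^ 2 / (2 * δt)) := by
    rw [← Real.exp_add, ← Real.exp_add]
    congr 1
    have hmt : mt = 1 - γ * (1 - mtm1) := by linarith [hγ']
    subst hμstar hδstar hδt hmt
    field_simp
    ring
  calc (2 * π * δcond) ^ (-(1:ℝ)/2) * Real.exp (-(z - (γ * w + (mt - γ * mtm1) * x)) ^ 2 / (2 * δcond)) *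
        ((2 * π * δtm1) ^ (-(1:ℝ)/2) * Real.exp (-(w - ((1 - mtm1) * y₀ + mtm1 * x)) ^ 2 / (2 * δtm1)))
      = ((2 * π * δcond) ^ (-(1:ℝ)/2) * (2 * π * δtm1) ^ (-(1:ℝ)/2)) *
        (Real.exp (-(z - (γ * w + (mt - γ * mtm1) * x)) ^ 2 / (2 * δcond)) *
         Real.exp (-(w - ((1 - mtm1) * y₀ + mtm1 * x)) ^ 2 / (2 * δtm1))) := by ring
    _ = ((2 * π * δstar) ^ (-(1:ℝ)/2) * (2 * π * δt) ^ (-(1:ℝ)/2)) *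
        (Real.exp (-(w - μstar) ^ 2 / (2 * δstar)) *
         Real.exp (-(z - ((1 - mt) * y₀ + mt * x)) ^ 2 / (2 * δt))) := by rw [hconst, hexp]
    _ = _ := by ring
end

section
/- Let E be a real vector space, x, y₀, ε ∈ E, and m_t, m_{t−1}, δ_t, δ_{t−1} ∈ ℝ with m_{t−1} ≠ 1, δ_t ≠ 0, δ_{t−1} ≥ 0, δ_t ≥ 0. Set γ = (1−m_t)/(1−m_{t−1}), δ_{t|t−1} = δ_t − γ²·δ_{t−1}, c_{xt} = m_{t−1} − m_t·γ·δ_{t−1}/δ_t, c_{yt} = γ·δ_{t−1}/δ_t + (1−m_{t−1})·δ_{t|t−1}/δ_t, and c_{εt} = −(1−m_{t−1})·δ_{t|t−1}/δ_t. If y_t = (1−m_t)·y₀ + m_t·x + √δ_t·ε, then (δ_{t−1}/δ_t)·γ·y_t + (1−m_{t−1})·(δ_{t|t−1}/δ_t)·y₀ + (m_{t−1} − m_t·γ·δ_{t−1}/δ_t)·x = c_{xt}·x + c_{yt}·y_t + c_{εt}·(m_t·(x − y₀) + √δ_t·ε). -/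
/-- Reparametrization of the Brownian-bridge reverse-posterior mean (Appendix A.2):
if `y_t = (1−m_t)·y₀ + m_t·x + √δ_t·ε`, then the posterior mean
`(δ_{t−1}/δ_t)γ·y_t + (1−m_{t−1})(δ_{t|t−1}/δ_t)·y₀ + (m_{t−1} − m_tγδ_{t−1}/δ_t)·x`
equals `c_{xt}·x + c_{yt}·y_t + c_{εt}·(m_t(x − y₀) + √δ_t·ε)`. -/
theorem bbdm_posterior_mean_reparam {E : Type*} [AddCommGroup E] [Module ℝ E]
    (x y₀ ε yt : E) (mt mtm1 δt δtm1 : ℝ)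
    (hm : mtm1 ≠ 1) (hδt0 : δt ≠ 0) (hδtm1 : 0 ≤ δtm1) (hδt : 0 ≤ δt)
    (γ δcond cxt cyt cεt : ℝ)
    (hγ : γ = (1 - mt) / (1 - mtm1))
    (hδcond : δcond = δt - γ ^ 2 * δtm1)
    (hcxt : cxt = mtm1 - mt * γ * δtm1 / δt)
    (hcyt : cyt = γ * δtm1 / δt + (1 - mtm1) * δcond / δt)
    (hcεt : cεt = -((1 - mtm1) * δcond / δt))
    (hyt : yt = (1 - mt) • y₀ + mt • x + (Real.sqrt δt) • ε) :
    (δtm1 / δt * γ) • yt + ((1 - mtm1) * (δcond / δt)) • y₀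
        + (mtm1 - mt * γ * δtm1 / δt) • x
      = cxt • x + cyt • yt + cεt • (mt • (x - y₀) + (Real.sqrt δt) • ε) := by
  subst hcxt hcyt hcεt hyt
  match_scalars <;> field_simp <;> ring
end

section
/- Let E be a real normed vector space, x, y₀, ε, e ∈ E, and let m_t, m_{t−1}, δ_t, δ_{t−1}, γ, δ_{t|t−1}, c_{xt}, c_{yt}, c_{εt} be as follows: m_{t−1} ≠ 1, δ_t ≠ 0, δ_{t−1} ≥ 0, δ_t ≥ 0, γ = (1−m_t)/(1−m_{t−1}), δ_{t|t−1} = δ_t − γ²·δ_{t−1}, c_{xt} = m_{t−1} − m_t·γ·δ_{t−1}/δ_t, c_{yt} = γ·δ_{t−1}/δ_t + (1−m_{t−1})·δ_{t|t−1}/δ_t, c_{εt} = −(1−m_{t−1})·δ_{t|t−1}/δ_t. If y_t = (1−m_t)·y₀ + m_t·x + √δ_t·ε, then for every e ∈ E, ‖[(δ_{t−1}/δ_t)·γ·y_t + (1−m_{t−1})·(δ_{t|t−1}/δ_t)·y₀ + c_{xt}·x] − [c_{xt}·x + c_{yt}·y_t + c_{εt}·e]‖ = |c_{εt}| · ‖m_t·(x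 − y₀) + √δ_t·ε − e‖. -/
/-- The per-step mean-matching error is proportional to the intra-class loss
(Appendix A.2 / Eq. (10)): for `y_t = (1−m_t)·y₀ + m_t·x + √δ_t·ε` and any predictor
output `e`, the distance between the true posterior mean and the model mean
`c_{xt}·x + c_{yt}·y_t + c_{εt}·e` equals `|c_{εt}|·‖m_t(x−y₀) + √δ_t·ε − e‖`. -/
theorem bbdm_mean_matching_intra {E : Type*} [NormedAddCommGroup E] [NormedSpace ℝ E]
    (x y₀ ε yt : E) (mt mtm1 δt δtm1 : ℝ)
    (hm : mtm1 ≠ 1) (hδt0 : δt ≠ 0) (hδtm1 : 0 ≤ δtm1) (hδt : 0 ≤ δt)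
    (γ δcond cxt cyt cεt : ℝ)
    (hγ : γ = (1 - mt) / (1 - mtm1))
    (hδcond : δcond = δt - γ ^ 2 * δtm1)
    (hcxt : cxt = mtm1 - mt * γ * δtm1 / δt)
    (hcyt : cyt = γ * δtm1 / δt + (1 - mtm1) * δcond / δt)
    (hcεt : cεt = -((1 - mtm1) * δcond / δt))
    (hyt : yt = (1 - mt) • y₀ + mt • x + (Real.sqrt δt) • ε) :
    ∀ e : E,
      ‖((δtm1 / δt * γ) • yt + ((1 - mtm1) * (δcond / δt)) • y₀ + cxt • x)
          - (cxt • x + cyt • yt + cεt • e)‖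
        = |cεt| * ‖mt • (x - y₀) + (Real.sqrt δt) • ε - e‖ := by
  intro e
  have h : ((δtm1 / δt * γ) • yt + ((1 - mtm1) * (δcond / δt)) • y₀ + cxt • x)
      - (cxt • x + cyt • yt + cεt • e)
      = cεt • (mt • (x - y₀) + (Real.sqrt δt) • ε - e) := by
    subst hyt hcyt hcεt
    match_scalars <;> field_simp <;> ring
  rw [h, norm_smul, Real.norm_eq_abs]
end

section
/- Let E be a real vector space, x, y₀ⁱ, y₀ʲ, ε_t ∈ E, and m_t, m_{t−1}, δ_t, δ_{t−1} ∈ ℝ with m_{t−1} ≠ 1, δ_t ≠ 0. Set γ = (1−m_t)/(1−m_{t−1}), δ_{t|t−1} = δ_t − γ²·δ_{t−1}, c_{xt} = m_{t−1} − m_t·γ·δ_{t−1}/δ_t, c_{yt} = γ·δ_{t−1}/δ_t + (1−m_{t−1})·δ_{t|t−1}/δ_t, c_{εt} = −(1−m_{t−1})·δ_{t|t−1}/δ_t. If y_t^{js} = (1−m_{t−1})·y₀ⁱ + (m_{t−1}−m_t)·y₀ʲ + m_t·x + √δ_t·ε_t, then (δ_{t−1}/δ_t)·γ·y_t^{js}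 + (1−m_{t−1})·(δ_{t|t−1}/δ_t)·y₀ⁱ + (m_{t−1} − m_t·γ·δ_{t−1}/δ_t)·x = c_{xt}·x + c_{yt}·y_t^{js} + c_{εt}·(m_t·(x − y₀ʲ) + m_{t−1}·(y₀ʲ − y₀ⁱ) + √δ_t·ε_t). -/
/-- Core computation in Proposition 1 (Appendix B.1): at the cross-class state
`y_t^{js} = (1−m_{t−1})·y₀ⁱ + (m_{t−1}−m_t)·y₀ʲ + m_t·x + √δ_t·ε_t`, the posterior mean
`(δ_{t−1}/δ_t)γ·y_t^{js} + (1−m_{t−1})(δ_{t|t−1}/δ_t)·y₀ⁱ + (m_{t−1} − m_tγδ_{t−1}/δ_t)·x`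
equals `c_{xt}·x + c_{yt}·y_t^{js} + c_{εt}·(m_t(x−y₀ʲ) + m_{t−1}(y₀ʲ−y₀ⁱ) + √δ_t·ε_t)`. -/
theorem bbdm_inter_class_mean_reparam {E : Type*} [AddCommGroup E] [Module ℝ E]
    (x y₀i y₀j εt ytjs : E) (mt mtm1 δt δtm1 : ℝ)
    (hm : mtm1 ≠ 1) (hδt0 : δt ≠ 0)
    (γ δcond cxt cyt cεt : ℝ)
    (hγ : γ = (1 - mt) / (1 - mtm1))
    (hδcond : δcond = δt - γ ^ 2 * δtm1)
    (hcxt : cxt = mtm1 - mt * γ * δtm1 / δt)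
    (hcyt : cyt = γ * δtm1 / δt + (1 - mtm1) * δcond / δt)
    (hcεt : cεt = -((1 - mtm1) * δcond / δt))
    (hytjs : ytjs = (1 - mtm1) • y₀i + (mtm1 - mt) • y₀j + mt • x + (Real.sqrt δt) • εt) :
    (δtm1 / δt * γ) • ytjs + ((1 - mtm1) * (δcond / δt)) • y₀i
        + (mtm1 - mt * γ * δtm1 / δt) • x
      = cxt • x + cyt • ytjs
          + cεt • (mt • (x - y₀j) + mtm1 • (y₀j - y₀i) + (Real.sqrt δt) • εt) := by
  subst hγ hδcond hcxt hcyt hcεt hytjs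
  have h1 : (1 : ℝ) - mtm1 ≠ 0 := sub_ne_zero.mpr (Ne.symm hm)
  match_scalars <;> field_simp <;> ring
end

section
/- Let E be a real normed vector space, x, y₀ⁱ, y₀ʲ, ε_t, e ∈ E, and m_t, m_{t−1}, δ_t, δ_{t−1} ∈ ℝ with m_{t−1} ≠ 1, δ_t ≠ 0. With γ = (1−m_t)/(1−m_{t−1}), δ_{t|t−1} = δ_t − γ²·δ_{t−1}, c_{xt} = m_{t−1} − m_t·γ·δ_{t−1}/δ_t, c_{yt} = γ·δ_{t−1}/δ_t + (1−m_{t−1})·δ_{t|t−1}/δ_t, c_{εt} = −(1−m_{t−1})·δ_{t|t−1}/δ_t, and y_t^{js} = (1−m_{t−1})·y₀ⁱ + (m_{t−1}−m_t)·y₀ʲ + m_t·x + √δ_t·ε_t, one has ‖[(δ_{t−1}/δ_t)·γ·y_t^{js} + (1−m_{t−1})·(δ_{t|t−1}/δ_t)·y₀ⁱ + (m_{t−1} − m_t·γ·δ_{t−1}/δ_t)·x] − [c_{xt}·x + c_{yt}·y_t^{js} + c_{εt}·e]‖ = |c_{εt}| · ‖m_t·(x − y₀ʲ) + m_{t−1}·(y₀ʲ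 − y₀ⁱ) + √δ_t·ε_t − e‖ for every e ∈ E. -/
/-- Proposition 1 in mean-matching form (Appendix B.1 / Eq. (12)): the distance between the
true reverse-process posterior mean at the cross-class state `y_t^{js}` and the model mean
`c_{xt}·x + c_{yt}·y_t^{js} + c_{εt}·e` equals
`|c_{εt}|·‖m_t(x−y₀ʲ) + m_{t−1}(y₀ʲ−y₀ⁱ) + √δ_t·ε_t − e‖`. -/
theorem bbdm_inter_class_mean_matching {E : Type*} [NormedAddCommGroup E] [NormedSpace ℝ E]
    (x y₀i y₀j εt ytjs : E) (mt mtm1 δt δtm1 : ℝ)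
    (hm : mtm1 ≠ 1) (hδt0 : δt ≠ 0)
    (γ δcond cxt cyt cεt : ℝ)
    (hγ : γ = (1 - mt) / (1 - mtm1))
    (hδcond : δcond = δt - γ ^ 2 * δtm1)
    (hcxt : cxt = mtm1 - mt * γ * δtm1 / δt)
    (hcyt : cyt = γ * δtm1 / δt + (1 - mtm1) * δcond / δt)
    (hcεt : cεt = -((1 - mtm1) * δcond / δt))
    (hytjs : ytjs = (1 - mtm1) • y₀i + (mtm1 - mt) • y₀j + mt • x + (Real.sqrt δt) • εt) :
    ∀ e : E,
      ‖((δtm1 / δt * γ) • ytjs + ((1 - mtm1) * (δcond / δt)) • y₀i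
            + (mtm1 - mt * γ * δtm1 / δt) • x)
          - (cxt • x + cyt • ytjs + cεt • e)‖
        = |cεt| * ‖mt • (x - y₀j) + mtm1 • (y₀j - y₀i) + (Real.sqrt δt) • εt - e‖ := by
  intro e
  have key : ((δtm1 / δt * γ) • ytjs + ((1 - mtm1) * (δcond / δt)) • y₀i
            + (mtm1 - mt * γ * δtm1 / δt) • x)
          - (cxt • x + cyt • ytjs + cεt • e)
      = cεt • (mt • (x - y₀j) + mtm1 • (y₀j - y₀i) + (Real.sqrt δt) • εt - e) := by
    subst hytjs hcxt hcyt hcεt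
    module
  rw [key, norm_smul, Real.norm_eq_abs]
end
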